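/- arXiv:1808.00849 — 3 statements merged into one kernel-verified Lean document; each statement's English description precedes it below -/
import Mathlib

section
/- Let p > 1 be a real number and m ≥ 1 a natural number. For all vectors z, w in the Euclidean space ℝ^m with z ≠ 0 and w ≠ z, the strict inequality (1/p)·‖w‖^p > (1/p)·‖z‖^p + ‖z‖^(p-2)·⟨z, w − z⟩ holds. -/
open scoped RealInnerProductSpace

private lemma bern_strict {p a b : ℝ} (hp : 1 < p) (ha : 0 < a) (hb : 0 ≤ b)
    (hne : b ≠ a) : a ^ p + p * a ^ (p - 1) * (b - a) < b ^ p := by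
  have hdiv : (0:ℝ) ≤ b / a := div_nonneg hb ha.le
  have hs : (-1:ℝ) ≤ b / a - 1 := by linarith
  have hs' : b / a - 1 ≠ 0 := by
    intro h
    exact hne ((div_eq_one_iff_eq ha.ne').mp (by linarith))
  have h := one_add_mul_self_lt_rpow_one_add hs hs' hp
  rw [show 1 + (b / a - 1) = b / a by ring, Real.div_rpow hb ha.le] at h
  have hap : (0:ℝ) < a ^ p := Real.rpow_pos_of_pos ha p
  have h2 := (lt_div_iff₀ hap).mpr ((mul_lt_mul_iff_of_pos_right hap).mpr h)
  have h3 : (1 + p * (b / a - 1)) * a ^ p < b ^ p := by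
    exact (lt_div_iff₀ hap).mp h
  have hkey : a ^ (p - 1) = a ^ p / a := by
    rw [Real.rpow_sub ha, Real.rpow_one]
  rw [hkey]
  have heq : a ^ p + p * (a ^ p / a) * (b - a) = (1 + p * (b / a - 1)) * a ^ p := by
    field_simp
  linarith

private lemma bern_le {p a b : ℝ} (hp : 1 < p) (ha : 0 < a) (hb : 0 ≤ b) :
    a ^ p + p * a ^ (p - 1) * (b - a) ≤ b ^ p := by
  rcases eq_or_ne b a with h | h
  · subst h; simp
  · exact (bern_strict hp ha hb h).le

/-- Strict gradient inequality for the strictly convex function `z ↦ ‖z‖^p`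
(real power) on Euclidean space, `p > 1`: for `z ≠ 0` and `w ≠ z`,
`(1/p)·‖w‖^p > (1/p)·‖z‖^p + ‖z‖^(p-2)·⟨z, w − z⟩`. -/
theorem strict_gradient_inequality_rpow_norm
    (p : ℝ) (hp : 1 < p) (m : ℕ) (hm : 1 ≤ m)
    (z w : EuclideanSpace ℝ (Fin m)) (hz : z ≠ 0) (hwz : w ≠ z) :
    (1 / p) * ‖w‖ ^ p > (1 / p) * ‖z‖ ^ p + ‖z‖ ^ (p - 2) * ⟪z, w - z⟫ := by
  set a := ‖z‖ with ha_def
  set b := ‖w‖ with hb_def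
  have ha : 0 < a := norm_pos_iff.mpr hz
  have hb : 0 ≤ b := norm_nonneg w
  have hp0 : 0 < p := lt_trans one_pos hp
  have hinner : ⟪z, w - z⟫ = ⟪z, w⟫ - a ^ 2 := by
    rw [inner_sub_right, real_inner_self_eq_norm_sq]
  have hpos2 : (0:ℝ) < a ^ (p - 2) := Real.rpow_pos_of_pos ha _
  have h1 : a ^ (p - 2) * a ^ (2:ℕ) = a ^ p := by
    rw [← Real.rpow_natCast a 2, ← Real.rpow_add ha]; norm_num
  have h2 : a ^ (p - 2) * a = a ^ (p - 1) := by
    nth_rewrite 2 [← Real.rpow_one a]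
    rw [← Real.rpow_add ha]; congr 1; ring
  have h3 : a ^ (p - 1) * a = a ^ p := by
    nth_rewrite 2 [← Real.rpow_one a]
    rw [← Real.rpow_add ha]; congr 1; ring
  have hCS : ⟪z, w⟫ ≤ a * b := real_inner_le_norm z w
  rw [hinner]
  rcases hCS.lt_or_eq with hlt | heq
  · have hb2 := bern_le hp ha hb (b := b)
    have hmul : a ^ (p - 2) * (⟪z, w⟫ - a ^ 2) < a ^ (p - 2) * (a * b - a ^ 2) := by
      apply mul_lt_mul_of_pos_left _ hpos2
      linarith
    have hrw : a ^ (p - 2) * (a * b - a ^ 2) = a ^ (p - 1) * (b - a) := by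
      have : a ^ (p - 2) * (a * b - a ^ 2) = (a ^ (p - 2) * a) * b - a ^ (p - 2) * a ^ (2:ℕ) := by
        push_cast; ring
      rw [this, h1, h2]
      nlinarith [h3]
    rw [hrw] at hmul
    have hdiv : (1 / p) * b ^ p ≥ (1 / p) * a ^ p + a ^ (p - 1) * (b - a) := by
      have h4 := mul_le_mul_of_nonneg_left hb2 (le_of_lt (one_div_pos.mpr hp0))
      have h5 : 1 / p * (a ^ p + p * a ^ (p - 1) * (b - a))
          = 1 / p * a ^ p + a ^ (p - 1) * (b - a) := by field_simp
      linarith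
    linarith
  · have hbne : b ≠ a := by
      intro h
      apply hwz
      have hnorm : ‖w - z‖ ^ 2 = 0 := by
        rw [@norm_sub_sq_real]
        rw [real_inner_comm] at heq
        rw [heq, ← hb_def, h]
        ring
      have : ‖w - z‖ = 0 := by nlinarith [norm_nonneg (w - z)]
      rwa [norm_eq_zero, sub_eq_zero] at this
    have hb2 := bern_strict hp ha hb hbne
    have hrw : a ^ (p - 2) * (⟪z, w⟫ - a ^ 2) = a ^ (p - 1) * (b - a) := by
      have : a ^ (p - 2) * (a * b - a ^ 2) = (a ^ (p - 2) * a) * b - a ^ (p - 2) * a ^ (2:ℕ) := by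
        push_cast; ring
      rw [show ⟪z,w⟫ - a ^ 2 = a * b - a ^ 2 by rw [heq], this, h1, h2]
      nlinarith [h3]
    rw [hrw]
    have h4 := mul_lt_mul_of_pos_left hb2 (one_div_pos.mpr hp0)
    have h5 : 1 / p * (a ^ p + p * a ^ (p - 1) * (b - a))
        = 1 / p * a ^ p + a ^ (p - 1) * (b - a) := by field_simp
    linarith
end

section
/- Let 1 < p < ∞ be a real number, m ≥ 1 a natural number, and (α, μ) a measure space. Let V, W : α → ℝ^m be measurable functions with ∫ ‖V‖^p dμ < ∞ and ∫ ‖W‖^p dμ < ∞, and suppose V and W are not μ-almost everywhere equal. Then for every t ∈ (0,1), ∫ ‖t·V + (1−t)·W‖^p dμ < t·∫ ‖V‖^p dμ + (1−t)·∫ ‖W‖^p dμ. Moreover, for every real p ≥ 1 and arbitrary such V, W (not necessarily distinct), the non-strict inequality ∫ ‖t·V + (1−t)·W‖^p dμ ≤ t·∫ ‖V‖^p dμ + (1−t)·∫ ‖W‖^p dμ holds for all t ∈ [0,1]. -/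
open MeasureTheory

section Aux

variable {E : Type*} [NormedAddCommGroup E] [NormedSpace ℝ E]

lemma pEnergy_ptwise_le {p : ℝ} (hp : 1 ≤ p) {t : ℝ} (ht0 : 0 ≤ t) (ht1 : t ≤ 1) (x y : E) :
    ‖t • x + (1 - t) • y‖ ^ p ≤ t * ‖x‖ ^ p + (1 - t) * ‖y‖ ^ p := by
  have h1 : ‖t • x + (1 - t) • y‖ ≤ t * ‖x‖ + (1 - t) * ‖y‖ := by
    calc ‖t • x + (1 - t) • y‖ ≤ ‖t • x‖ + ‖(1 - t) • y‖ := norm_add_le _ _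
      _ = t * ‖x‖ + (1 - t) * ‖y‖ := by
        rw [norm_smul, norm_smul, Real.norm_of_nonneg ht0, Real.norm_of_nonneg (by linarith)]
  calc ‖t • x + (1 - t) • y‖ ^ p ≤ (t * ‖x‖ + (1 - t) * ‖y‖) ^ p :=
      Real.rpow_le_rpow (norm_nonneg _) h1 (by linarith)
    _ ≤ t * ‖x‖ ^ p + (1 - t) * ‖y‖ ^ p := by
      have h2 := (convexOn_rpow hp).2 (Set.mem_Ici.2 (norm_nonneg x))
        (Set.mem_Ici.2 (norm_nonneg y)) ht0 (show (0:ℝ) ≤ 1 - t by linarith)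
        (show t + (1 - t) = 1 by ring)
      simpa using h2

lemma pEnergy_ptwise_lt [StrictConvexSpace ℝ E]
    {p : ℝ} (hp : 1 < p) {t : ℝ} (ht0 : 0 < t) (ht1 : t < 1) {x y : E} (hxy : x ≠ y) :
    ‖t • x + (1 - t) • y‖ ^ p < t * ‖x‖ ^ p + (1 - t) * ‖y‖ ^ p := by
  have ht1' : (0 : ℝ) < 1 - t := by linarith
  rcases eq_or_ne ‖x‖ ‖y‖ with hnorm | hnorm
  · have hray : ¬ SameRay ℝ (t • x) ((1 - t) • y) := by
      intro h
      have h2 : SameRay ℝ (t⁻¹ • t • x) ((1 - t)⁻¹ • (1 - t) • y) :=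
        (h.pos_smul_left (by positivity)).pos_smul_right (by positivity)
      rw [smul_smul, smul_smul, inv_mul_cancel₀ ht0.ne', inv_mul_cancel₀ ht1'.ne',
        one_smul, one_smul] at h2
      exact hxy ((sameRay_iff_of_norm_eq hnorm).1 h2)
    have hlt : ‖t • x + (1 - t) • y‖ < t * ‖x‖ + (1 - t) * ‖y‖ := by
      have h3 := norm_add_lt_of_not_sameRay hray
      rwa [norm_smul, norm_smul, Real.norm_of_nonneg ht0.le,
        Real.norm_of_nonneg ht1'.le] at h3
    calc ‖t • x + (1 - t) • y‖ ^ p < (t * ‖x‖ + (1 - t) * ‖y‖) ^ p :=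
        Real.rpow_lt_rpow (norm_nonneg _) hlt (by linarith)
      _ ≤ t * ‖x‖ ^ p + (1 - t) * ‖y‖ ^ p := by
        have h2 := (convexOn_rpow hp.le).2 (Set.mem_Ici.2 (norm_nonneg x))
          (Set.mem_Ici.2 (norm_nonneg y)) ht0.le ht1'.le (show t + (1 - t) = 1 by ring)
        simpa using h2
  · have h1 : ‖t • x + (1 - t) • y‖ ^ p ≤ (t * ‖x‖ + (1 - t) * ‖y‖) ^ p := by
      refine Real.rpow_le_rpow (norm_nonneg _) ?_ (by linarith)
      calc ‖t • x + (1 - t) • y‖ ≤ ‖t • x‖ + ‖(1 - t) • y‖ := norm_add_le _ _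
        _ = t * ‖x‖ + (1 - t) * ‖y‖ := by
          rw [norm_smul, norm_smul, Real.norm_of_nonneg ht0.le, Real.norm_of_nonneg ht1'.le]
    have h2 := (strictConvexOn_rpow hp).2 (Set.mem_Ici.2 (norm_nonneg x))
      (Set.mem_Ici.2 (norm_nonneg y)) hnorm ht0 ht1' (show t + (1 - t) = 1 by ring)
    simp only [smul_eq_mul] at h2
    exact h1.trans_lt h2

end Aux

/-- Strict convexity of the `p`-energy integral `V ↦ ∫ ‖V‖^p dμ` on
`L^p(μ; ℝ^m)` for `1 < p < ∞` (first conjunct), together with the non-strict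
convexity inequality for every `p ≥ 1` (second conjunct). Norm powers are real
(rpow) powers and integrals are Lebesgue integrals with respect to `μ`. -/
theorem strict_convexity_p_energy_integral
    (m : ℕ) (hm : 1 ≤ m) {α : Type*} [MeasurableSpace α] (μ : Measure α) :
    (∀ p : ℝ, 1 < p →
      ∀ V W : α → EuclideanSpace ℝ (Fin m), Measurable V → Measurable W →
        (∫⁻ x, ENNReal.ofReal (‖V x‖ ^ p) ∂μ) < ⊤ →
        (∫⁻ x, ENNReal.ofReal (‖W x‖ ^ p) ∂μ) < ⊤ →
        ¬ (V =ᵐ[μ] W) →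
        ∀ t : ℝ, t ∈ Set.Ioo (0 : ℝ) 1 →
          (∫ x, ‖t • V x + (1 - t) • W x‖ ^ p ∂μ) <
            t * (∫ x, ‖V x‖ ^ p ∂μ) + (1 - t) * (∫ x, ‖W x‖ ^ p ∂μ)) ∧
    (∀ p : ℝ, 1 ≤ p →
      ∀ V W : α → EuclideanSpace ℝ (Fin m), Measurable V → Measurable W →
        (∫⁻ x, ENNReal.ofReal (‖V x‖ ^ p) ∂μ) < ⊤ →
        (∫⁻ x, ENNReal.ofReal (‖W x‖ ^ p) ∂μ) < ⊤ →
        ∀ t : ℝ, t ∈ Set.Icc (0 : ℝ) 1 →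
          (∫ x, ‖t • V x + (1 - t) • W x‖ ^ p ∂μ) ≤
            t * (∫ x, ‖V x‖ ^ p ∂μ) + (1 - t) * (∫ x, ‖W x‖ ^ p ∂μ)) := by
  -- integrability of `‖V‖^p` from measurability and finite lintegral
  have key : ∀ (p : ℝ), 1 ≤ p → ∀ (V : α → EuclideanSpace ℝ (Fin m)), Measurable V →
      (∫⁻ x, ENNReal.ofReal (‖V x‖ ^ p) ∂μ) < ⊤ →
      Integrable (fun x => ‖V x‖ ^ p) μ := by
    intro p hp V hV hfin
    have hm : Measurable fun x => ‖V x‖ ^ p :=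
      (Real.continuous_rpow_const (by linarith)).measurable.comp hV.norm
    refine ⟨hm.aestronglyMeasurable, ?_⟩
    rw [hasFiniteIntegral_iff_ofReal
      (Filter.Eventually.of_forall fun x => Real.rpow_nonneg (norm_nonneg _) p)]
    exact hfin
  have keyMid : ∀ (p : ℝ), 1 ≤ p → ∀ (V W : α → EuclideanSpace ℝ (Fin m)),
      Measurable V → Measurable W →
      Integrable (fun x => ‖V x‖ ^ p) μ → Integrable (fun x => ‖W x‖ ^ p) μ →
      ∀ t : ℝ, 0 ≤ t → t ≤ 1 →
      Integrable (fun x => ‖t • V x + (1 - t) • W x‖ ^ p) μ := by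
    intro p hp V W hV hW hIV hIW t ht0 ht1
    have hmVW : Measurable fun x => t • V x + (1 - t) • W x :=
      (hV.const_smul t).add (hW.const_smul (1 - t))
    have hm : Measurable fun x => ‖t • V x + (1 - t) • W x‖ ^ p :=
      (Real.continuous_rpow_const (by linarith)).measurable.comp hmVW.norm
    refine Integrable.mono' ((hIV.const_mul t).add (hIW.const_mul (1 - t)))
      hm.aestronglyMeasurable (Filter.Eventually.of_forall fun x => ?_)
    rw [Real.norm_of_nonneg (Real.rpow_nonneg (norm_nonneg _) p)]
    exact pEnergy_ptwise_le hp ht0 ht1 (V x) (W x)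
  constructor
  · intro p hp V W hV hW hfinV hfinW hne t ht
    obtain ⟨ht0, ht1⟩ := ht
    have hIV := key p hp.le V hV hfinV
    have hIW := key p hp.le W hW hfinW
    have hIM := keyMid p hp.le V W hV hW hIV hIW t ht0.le ht1.le
    set g : α → ℝ := fun x =>
      t * ‖V x‖ ^ p + (1 - t) * ‖W x‖ ^ p - ‖t • V x + (1 - t) • W x‖ ^ p with hg
    have hIg : Integrable g μ := ((hIV.const_mul t).add (hIW.const_mul (1 - t))).sub hIM
    have hg0 : 0 ≤ g := fun x =>
      sub_nonneg.2 (pEnergy_ptwise_le hp.le ht0.le ht1.le (V x) (W x))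
    have hpos : 0 < ∫ x, g x ∂μ := by
      rw [integral_pos_iff_support_of_nonneg hg0 hIg]
      have hsub : {x | V x ≠ W x} ⊆ Function.support g := by
        intro x hx
        exact (sub_pos.2 (pEnergy_ptwise_lt hp ht0 ht1 hx)).ne'
      have hne' : μ {x | V x ≠ W x} ≠ 0 := by
        intro h0
        exact hne (by rwa [Filter.EventuallyEq, ae_iff])
      exact lt_of_lt_of_le (pos_iff_ne_zero.2 hne') (measure_mono hsub)
    have hval : (∫ x, g x ∂μ) =
        (t * (∫ x, ‖V x‖ ^ p ∂μ) + (1 - t) * (∫ x, ‖W x‖ ^ p ∂μ)) -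
          ∫ x, ‖t • V x + (1 - t) • W x‖ ^ p ∂μ := by
      have hI1 : Integrable (fun x => t * ‖V x‖ ^ p + (1 - t) * ‖W x‖ ^ p) μ :=
        (hIV.const_mul t).add (hIW.const_mul (1 - t))
      rw [hg]
      rw [integral_sub hI1 hIM]
      congr 1
      rw [integral_add (hIV.const_mul t) (hIW.const_mul (1 - t)),
        integral_const_mul, integral_const_mul]
    rw [hval] at hpos
    linarith
  · intro p hp V W hV hW hfinV hfinW t ht
    obtain ⟨ht0, ht1⟩ := ht
    have hIV := key p hp V hV hfinV
    have hIW := key p hp W hW hfinW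
    have hIM := keyMid p hp V W hV hW hIV hIW t ht0 ht1
    calc (∫ x, ‖t • V x + (1 - t) • W x‖ ^ p ∂μ)
        ≤ ∫ x, t * ‖V x‖ ^ p + (1 - t) * ‖W x‖ ^ p ∂μ :=
          integral_mono hIM ((hIV.const_mul t).add (hIW.const_mul (1 - t)))
            (fun x => pEnergy_ptwise_le hp ht0 ht1 (V x) (W x))
      _ = t * (∫ x, ‖V x‖ ^ p ∂μ) + (1 - t) * (∫ x, ‖W x‖ ^ p ∂μ) := by
          rw [integral_add (hIV.const_mul t) (hIW.const_mul (1 - t)),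
            integral_const_mul, integral_const_mul]
end

section
/- Let 1 < p < ∞ be a real number, q its conjugate exponent (1/p + 1/q = 1), m ≥ 1 a natural number, and (α, μ) a measure space. Let V, W : α → ℝ^m be measurable with ∫ ‖V‖^p dμ < ∞ and ∫ ‖W‖^p dμ < ∞. Define h : α → ℝ by h(x) = ‖V(x)‖^(p-2)·⟨V(x), W(x) − V(x)⟩ when V(x) ≠ 0 and h(x) = 0 when V(x) = 0. Then h is μ-integrable and ∫ ( (1/p)·‖W(x)‖^p − (1/p)·‖V(x)‖^p − h(x) ) dμ(x) ≥ 0. -/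
open MeasureTheory
open scoped RealInnerProductSpace Classical

/-- Integrated gradient inequality: for `1 < p < ∞` with conjugate exponent `q`,
and `V, W : α → ℝ^m` measurable with finite `p`-energy, the function
`h(x) = ‖V(x)‖^(p-2)·⟨V(x), W(x) − V(x)⟩` (set to `0` where `V(x) = 0`) is
`μ`-integrable, and `∫ ((1/p)·‖W‖^p − (1/p)·‖V‖^p − h) dμ ≥ 0`. -/
theorem integrated_gradient_inequality
    (p q : ℝ) (hp : 1 < p) (hpq : 1 / p + 1 / q = 1)
    (m : ℕ) (hm : 1 ≤ m)
    {α : Type*} [MeasurableSpace α] (μ : Measure α)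
    (V W : α → EuclideanSpace ℝ (Fin m)) (hV : Measurable V) (hW : Measurable W)
    (hVp : (∫⁻ x, ENNReal.ofReal (‖V x‖ ^ p) ∂μ) < ⊤)
    (hWp : (∫⁻ x, ENNReal.ofReal (‖W x‖ ^ p) ∂μ) < ⊤)
    (h : α → ℝ)
    (hh : ∀ x, h x = if V x = 0 then 0 else ‖V x‖ ^ (p - 2) * ⟪V x, W x - V x⟫) :
    Integrable h μ ∧
      0 ≤ ∫ x, ((1 / p) * ‖W x‖ ^ p - (1 / p) * ‖V x‖ ^ p - h x) ∂μ := by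
  have hp0 : (0:ℝ) < p := lt_trans one_pos hp
  have hconj : Real.HolderConjugate p q := Real.holderConjugate_iff.mpr ⟨hp, by rw [← one_div, ← one_div]; exact hpq⟩
  have hq0 : (0:ℝ) < q := hconj.symm.pos
  have hpm1q : (p - 1) * q = p := hconj.sub_one_mul_conj
  -- integrability of ‖V‖^p and ‖W‖^p
  have ImV : Measurable fun x => ‖V x‖ ^ p := hV.norm.pow_const p
  have ImW : Measurable fun x => ‖W x‖ ^ p := hW.norm.pow_const p
  have IV : Integrable (fun x => ‖V x‖ ^ p) μ := by
    refine ⟨ImV.aestronglyMeasurable, ?_⟩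
    rw [hasFiniteIntegral_iff_ofReal (Filter.Eventually.of_forall fun x =>
      Real.rpow_nonneg (norm_nonneg _) _)]
    exact hVp
  have IW : Integrable (fun x => ‖W x‖ ^ p) μ := by
    refine ⟨ImW.aestronglyMeasurable, ?_⟩
    rw [hasFiniteIntegral_iff_ofReal (Filter.Eventually.of_forall fun x =>
      Real.rpow_nonneg (norm_nonneg _) _)]
    exact hWp
  -- measurability of h
  have hfun : h = fun x => if V x = 0 then 0 else ‖V x‖ ^ (p - 2) * ⟪V x, W x - V x⟫ :=
    funext hh
  have hmeas : Measurable h := by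
    rw [hfun]
    exact Measurable.ite (measurableSet_eq_fun hV measurable_const) measurable_const
      ((hV.norm.pow_const _).mul (hV.inner (hW.sub hV)))
  -- key pointwise bound on |h|
  have habs : ∀ x, |h x| ≤ ‖V x‖ ^ p / q + ‖W x‖ ^ p / p + ‖V x‖ ^ p := by
    intro x
    have hnn : (0:ℝ) ≤ ‖V x‖ ^ p / q + ‖W x‖ ^ p / p + ‖V x‖ ^ p := by
      positivity
    rw [hh x]
    by_cases hv : V x = 0
    · simp only [hv, if_pos, abs_zero]
      simpa [hv, Real.zero_rpow hp0.ne'] using hnn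
    · rw [if_neg hv]
      have hvpos : (0:ℝ) < ‖V x‖ := norm_pos_iff.mpr hv
      have h1 : |‖V x‖ ^ (p - 2) * ⟪V x, W x - V x⟫|
          ≤ ‖V x‖ ^ (p - 1) * ‖W x - V x‖ := by
        rw [abs_mul, abs_of_nonneg (Real.rpow_nonneg (norm_nonneg _) _)]
        calc ‖V x‖ ^ (p - 2) * |⟪V x, W x - V x⟫|
            ≤ ‖V x‖ ^ (p - 2) * (‖V x‖ * ‖W x - V x‖) := by
              exact mul_le_mul_of_nonneg_left (abs_real_inner_le_norm _ _)
                (Real.rpow_nonneg (norm_nonneg _) _)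
          _ = ‖V x‖ ^ (p - 1) * ‖W x - V x‖ := by
              rw [← mul_assoc, ← Real.rpow_add_one hvpos.ne' (p - 2),
                show p - 2 + 1 = p - 1 by ring]
      have h2 : ‖V x‖ ^ (p - 1) * ‖W x - V x‖
          ≤ ‖V x‖ ^ (p - 1) * (‖W x‖ + ‖V x‖) := by
        refine mul_le_mul_of_nonneg_left ?_ (Real.rpow_nonneg (norm_nonneg _) _)
        exact (norm_sub_le _ _).trans (by rw [add_comm])
      have h3 : ‖V x‖ ^ (p - 1) * ‖W x‖ ≤ ‖V x‖ ^ p / q + ‖W x‖ ^ p / p := by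
        have := Real.young_inequality_of_nonneg
          (Real.rpow_nonneg (norm_nonneg (V x)) (p - 1)) (norm_nonneg (W x)) hconj.symm
        calc ‖V x‖ ^ (p - 1) * ‖W x‖
            ≤ (‖V x‖ ^ (p - 1)) ^ q / q + ‖W x‖ ^ p / p := this
          _ = ‖V x‖ ^ p / q + ‖W x‖ ^ p / p := by
              rw [← Real.rpow_mul (norm_nonneg _), hpm1q]
      have h4 : ‖V x‖ ^ (p - 1) * ‖V x‖ = ‖V x‖ ^ p := by
        rw [← Real.rpow_add_one hvpos.ne' (p - 1), show p - 1 + 1 = p by ring]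
      calc |‖V x‖ ^ (p - 2) * ⟪V x, W x - V x⟫|
          ≤ ‖V x‖ ^ (p - 1) * (‖W x‖ + ‖V x‖) := h1.trans h2
        _ = ‖V x‖ ^ (p - 1) * ‖W x‖ + ‖V x‖ ^ p := by rw [mul_add, h4]
        _ ≤ ‖V x‖ ^ p / q + ‖W x‖ ^ p / p + ‖V x‖ ^ p := by linarith
  have hInt : Integrable h μ := by
    refine Integrable.mono' (((IV.div_const q).add (IW.div_const p)).add IV)
      hmeas.aestronglyMeasurable (Filter.Eventually.of_forall fun x => ?_)
    simpa [Real.norm_eq_abs] using habs x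
  refine ⟨hInt, ?_⟩
  -- pointwise convexity inequality
  have hpt : ∀ x, 0 ≤ (1 / p) * ‖W x‖ ^ p - (1 / p) * ‖V x‖ ^ p - h x := by
    intro x
    rw [hh x]
    by_cases hv : V x = 0
    · simp only [hv, if_pos]
      have : ‖(0 : EuclideanSpace ℝ (Fin m))‖ ^ p = 0 := by
        rw [norm_zero, Real.zero_rpow hp0.ne']
      rw [this]
      have : (0:ℝ) ≤ (1 / p) * ‖W x‖ ^ p := by positivity
      linarith
    · rw [if_neg hv]
      have hvpos : (0:ℝ) < ‖V x‖ := norm_pos_iff.mpr hv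
      have hrnn : (0:ℝ) ≤ ‖V x‖ ^ (p - 2) := Real.rpow_nonneg (norm_nonneg _) _
      have hinner : ⟪V x, W x - V x⟫ = ⟪V x, W x⟫ - ‖V x‖ ^ (2:ℕ) := by
        rw [inner_sub_right, real_inner_self_eq_norm_sq]
      have hsq : ‖V x‖ ^ (p - 2) * ‖V x‖ ^ (2:ℕ) = ‖V x‖ ^ p := by
        rw [← Real.rpow_natCast ‖V x‖ 2, ← Real.rpow_add hvpos]
        norm_num
      have h5 : ‖V x‖ ^ (p - 2) * ⟪V x, W x⟫ ≤ ‖V x‖ ^ p / q + ‖W x‖ ^ p / p := by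
        calc ‖V x‖ ^ (p - 2) * ⟪V x, W x⟫
            ≤ ‖V x‖ ^ (p - 2) * (‖V x‖ * ‖W x‖) :=
              mul_le_mul_of_nonneg_left (real_inner_le_norm _ _) hrnn
          _ = ‖V x‖ ^ (p - 1) * ‖W x‖ := by
              rw [← mul_assoc, ← Real.rpow_add_one hvpos.ne' (p - 2),
                show p - 2 + 1 = p - 1 by ring]
          _ ≤ (‖V x‖ ^ (p - 1)) ^ q / q + ‖W x‖ ^ p / p :=
              Real.young_inequality_of_nonneg
                (Real.rpow_nonneg (norm_nonneg _) _) (norm_nonneg _) hconj.symm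
          _ = ‖V x‖ ^ p / q + ‖W x‖ ^ p / p := by
              rw [← Real.rpow_mul (norm_nonneg _), hpm1q]
      have key : ‖V x‖ ^ (p - 2) * ⟪V x, W x - V x⟫
          ≤ ‖V x‖ ^ p / q + ‖W x‖ ^ p / p - ‖V x‖ ^ p := by
        rw [hinner, mul_sub, hsq]
        linarith
      have hq1 : ‖V x‖ ^ p / q - ‖V x‖ ^ p = - ((1 / p) * ‖V x‖ ^ p) := by
        have : 1 / q - 1 = - (1 / p) := by linarith
        field_simp
        nlinarith [Real.rpow_nonneg (norm_nonneg (V x)) p, hp0, hq0,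
          mul_pos hp0 hq0]
      have := key
      rw [div_eq_mul_inv (‖W x‖ ^ p) p, mul_comm (‖W x‖ ^ p) p⁻¹, ← one_div] at this
      linarith [this, hq1]
  have hIntAll : Integrable (fun x => (1 / p) * ‖W x‖ ^ p - (1 / p) * ‖V x‖ ^ p - h x) μ :=
    ((IW.const_mul _).sub (IV.const_mul _)).sub hInt
  exact integral_nonneg hpt
end
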